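/- arXiv:1206.0262 — 4 statements merged into one kernel-verified Lean document; each statement's English description precedes it below -/
import Mathlib

section
/- Let A ∈ ℝ^{k×n} and D ∈ ℝ^{l×n} be matrices with ker(A) ∩ ker(D) = {0}, let m ∈ ℝ^k, σ > 0 and λ > 0. Then the unnormalized posterior density u ↦ exp(−(1/(2σ²))‖m − A u‖₂² − λ‖D u‖₁) is integrable over ℝ^n. -/
open MeasureTheory Set Real

/-!
Since `ker A ∩ ker D = 0`, the map `u ↦ (A u, D u)` is injective, hence bounded below on the
finite-dimensional space `ℝⁿ`: `ε ‖u‖ ≤ max ‖A u‖ ‖D u‖`. The Gaussian misfit dominates a linear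
penalty, `-q t² ≤ 1/(4q) - |t|`, so the exponent is at most `C - min 1 λ · ε ‖u‖`, and
`exp (-c ‖u‖)` is integrable on `ℝⁿ` because it is dominated by a product of one-dimensional
Laplace densities.
-/

theorem integrable_exp_neg_mul_abs {d : ℝ} (hd : 0 < d) :
    Integrable fun x : ℝ => exp (-(d * |x|)) := by
  rw [← integrableOn_univ, ← Iic_union_Ioi (a := (0 : ℝ)), integrableOn_union]
  constructor
  · refine (integrableOn_exp_mul_Iic hd 0).congr_fun (fun x hx => ?_) measurableSet_Iic
    rw [abs_of_nonpos hx, mul_neg, neg_neg]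
  · refine (exp_neg_integrableOn_Ioi 0 hd).congr_fun (fun x hx => ?_) measurableSet_Ioi
    dsimp only
    rw [abs_of_pos hx, neg_mul]

theorem integrable_exp_neg_mul_norm {ι : Type*} [Fintype ι] {c : ℝ} (hc : 0 < c) :
    Integrable fun u : ι → ℝ => exp (-(c * ‖u‖)) := by
  -- `+ 1` keeps `d` positive when `ι` is empty
  set d := c / (Fintype.card ι + 1)
  have hd : 0 < d := by positivity
  have hprod : Integrable fun u : ι → ℝ => ∏ i, exp (-(d * |u i|)) :=
    Integrable.fintype_prod (f := fun _ x => exp (-(d * |x|))) fun _ =>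
      integrable_exp_neg_mul_abs hd
  refine hprod.mono (by fun_prop) (ae_of_all _ fun u => ?_)
  have hsum : d * ∑ i, |u i| ≤ c * ‖u‖ := calc
    d * ∑ i, |u i| ≤ d * ((Fintype.card ι + 1) * ‖u‖) := by
      gcongr
      calc ∑ i, |u i| ≤ Fintype.card ι * ‖u‖ := by
            simpa using Pi.sum_norm_apply_le_norm u
        _ ≤ _ := by gcongr; linarith
    _ = c * ‖u‖ := by rw [← mul_assoc, div_mul_cancel₀ _ (by positivity)]
  rw [← exp_sum, Finset.sum_neg_distrib, ← Finset.mul_sum, norm_of_nonneg (exp_pos _).le,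
    norm_of_nonneg (exp_pos _).le]
  exact exp_le_exp.mpr (neg_le_neg hsum)

theorem LinearMap.exists_pos_mul_norm_le_norm {𝕜 E F : Type*} [NontriviallyNormedField 𝕜]
    [CompleteSpace 𝕜] [NormedAddCommGroup E] [NormedSpace 𝕜 E] [FiniteDimensional 𝕜 E]
    [NormedAddCommGroup F] [NormedSpace 𝕜 F] (f : E →ₗ[𝕜] F) (hf : Function.Injective f) :
    ∃ ε > 0, ∀ u, ε * ‖u‖ ≤ ‖f u‖ := by
  obtain ⟨K, hK, hfK⟩ := f.exists_antilipschitzWith (LinearMap.ker_eq_bot.mpr hf)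
  refine ⟨(K : ℝ)⁻¹, by positivity, fun u => ?_⟩
  rw [inv_mul_le_iff₀ (by positivity)]
  simpa using hfK.le_mul_norm_sub 0 u

theorem neg_mul_sq_sub_le {q : ℝ} (hq : 0 < q) (a b : ℝ) :
    -q * (a - b) ^ 2 ≤ |a| + 1 / (4 * q) - |b| := by
  have hsq : |a - b| ≤ q * (a - b) ^ 2 + 1 / (4 * q) := by
    rw [← sq_abs (a - b)]
    have := sq_nonneg (2 * q * |a - b| - 1)
    field_simp
    linarith
  have := abs_sub_abs_le_abs_sub b a
  rw [abs_sub_comm b a] at this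
  linarith

theorem norm_le_sum_abs {ι : Type*} [Fintype ι] (v : ι → ℝ) : ‖v‖ ≤ ∑ j, |v j| :=
  (pi_norm_le_iff_of_nonneg (by positivity)).mpr fun j =>
    Finset.single_le_sum (f := fun j => |v j|) (fun j _ => abs_nonneg _) (Finset.mem_univ j)

theorem neg_mul_sum_sq_sub_le {ι : Type*} [Fintype ι] {q : ℝ} (hq : 0 < q) (m v : ι → ℝ) :
    -q * ∑ j, (m j - v j) ^ 2 ≤ ∑ j, (|m j| + 1 / (4 * q)) - ‖v‖ := calc
  -q * ∑ j, (m j - v j) ^ 2 ≤ ∑ j, (|m j| + 1 / (4 * q) - |v j|) := by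
    rw [Finset.mul_sum]; exact Finset.sum_le_sum fun j _ => neg_mul_sq_sub_le hq _ _
  _ ≤ _ := by
    rw [Finset.sum_sub_distrib]
    gcongr
    exact norm_le_sum_abs v

/-- If `ker A ∩ ker D = {0}`, the unnormalized posterior density
`u ↦ exp(−(1/(2σ²))‖m − Au‖₂² − λ‖Du‖₁)` is integrable over `ℝⁿ`. -/
theorem stmt_1 (k l n : ℕ) (A : Matrix (Fin k) (Fin n) ℝ) (D : Matrix (Fin l) (Fin n) ℝ)
    (hker : ∀ u : Fin n → ℝ, A.mulVec u = 0 → D.mulVec u = 0 → u = 0)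
    (m : Fin k → ℝ) (σ lam : ℝ) (hσ : 0 < σ) (hlam : 0 < lam) :
    Integrable (fun u : Fin n → ℝ =>
      Real.exp (-(1 / (2 * σ ^ 2)) * (∑ j, (m j - A.mulVec u j) ^ 2)
        - lam * ∑ j, |D.mulVec u j|)) := by
  set q := 1 / (2 * σ ^ 2)
  have hq : 0 < q := by positivity
  set L := A.mulVecLin.prod D.mulVecLin
  have hL : Function.Injective L := (injective_iff_map_eq_zero L).mpr fun u hu =>
    hker u (congrArg Prod.fst hu) (congrArg Prod.snd hu)
  obtain ⟨ε, hε, hεL⟩ := L.exists_pos_mul_norm_le_norm hL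
  set c := min 1 lam
  have hc : 0 < c := lt_min one_pos hlam
  set C := ∑ j, (|m j| + 1 / (4 * q))
  refine ((integrable_exp_neg_mul_norm (mul_pos hc hε)).const_mul (exp C)).mono'
    (Continuous.aestronglyMeasurable (by fun_prop)) (ae_of_all _ fun u => ?_)
  rw [norm_of_nonneg (exp_pos _).le, ← exp_add]
  refine exp_le_exp.mpr ?_
  have hfit := neg_mul_sum_sq_sub_le hq m (A.mulVec u)
  have hprior : lam * ‖D.mulVec u‖ ≤ lam * ∑ j, |D.mulVec u j| := by
    gcongr; exact norm_le_sum_abs _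
  have hcoer : c * (ε * ‖u‖) ≤ ‖A.mulVec u‖ + lam * ‖D.mulVec u‖ := calc
    c * (ε * ‖u‖) ≤ c * max ‖A.mulVec u‖ ‖D.mulVec u‖ := by gcongr; exact hεL u
    _ ≤ c * ‖A.mulVec u‖ + c * ‖D.mulVec u‖ := by
      rw [← mul_add]; gcongr; exact max_le_add_of_nonneg (norm_nonneg _) (norm_nonneg _)
    _ ≤ _ := add_le_add (mul_le_of_le_one_left (norm_nonneg _) (min_le_left _ _))
      (by gcongr; exact min_le_right _ _)
  linarith
end

section
/- Let a > 0, b ∈ ℝ, c ≥ 0 and y ≥ 0. Set α₊ := (b+c)/(2√a), α₋ := (c−b)/(2√a), ẽ₊ := exp((b+c)²/(4a)), ẽ₋ := exp((c−b)²/(4a)) and I(w) := ∫_{w}^{∞} exp(−t²) dt. Then ∫_{−∞}^{y} exp(−a x² + b x − c|x|) dx = (1/√a) [ ẽ₊ · I(α₊) + ẽ₋ · ( I(α₋) − I(√a·y + α₋) ) ]. -/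
open MeasureTheory Set

lemma aux_shift_Ioi (g : ℝ → ℝ) (α β : ℝ) :
    ∫ t in Set.Ioi β, g (t + α) = ∫ t in Set.Ioi (β + α), g t := by
  have A : MeasurableEmbedding (fun x : ℝ => x + α) :=
    (Homeomorph.addRight α).measurableEmbedding
  have h := A.setIntegral_map (μ := volume) g (Set.Ioi (β + α))
  rw [map_add_right_eq_self volume α] at h
  have hpre : (fun x : ℝ => x + α) ⁻¹' Set.Ioi (β + α) = Set.Ioi β := by
    ext x; simp
  rw [h, hpre]

/-- Right branch (`y ≥ 0`) of the cdf of `x ↦ exp(−a x² + b x − c|x|)`: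
`∫_{−∞}^{y} p = (1/√a)[ẽ₊ I(α₊) + ẽ₋ (I(α₋) − I(√a·y + α₋))]`. -/
theorem stmt_8 (a b c y : ℝ) (ha : 0 < a) (hc : 0 ≤ c) (hy : 0 ≤ y) :
    (∫ x in Set.Iic y, Real.exp (-a * x ^ 2 + b * x - c * |x|))
      = (1 / Real.sqrt a)
        * (Real.exp ((b + c) ^ 2 / (4 * a))
              * (∫ t in Set.Ici ((b + c) / (2 * Real.sqrt a)), Real.exp (-t ^ 2))
            + Real.exp ((c - b) ^ 2 / (4 * a))
              * ((∫ t in Set.Ici ((c - b) / (2 * Real.sqrt a)), Real.exp (-t ^ 2))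
                  - ∫ t in Set.Ici (Real.sqrt a * y + (c - b) / (2 * Real.sqrt a)),
                      Real.exp (-t ^ 2))) := by
  have hs : 0 < Real.sqrt a := Real.sqrt_pos.mpr ha
  set s : ℝ := Real.sqrt a with hsdef
  have hs2 : s ^ 2 = a := Real.sq_sqrt ha.le
  set αp : ℝ := (b + c) / (2 * s) with hαp
  set αm : ℝ := (c - b) / (2 * s) with hαm
  have hg : Integrable (fun t : ℝ => Real.exp (-t ^ 2)) := by
    simpa using integrable_exp_neg_mul_sq (one_pos : (0:ℝ) < 1)
  -- pointwise identities
  have hptA : ∀ x ∈ Set.Iic (0:ℝ),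
      Real.exp (-a * x ^ 2 + b * x - c * |x|)
        = Real.exp ((b + c) ^ 2 / (4 * a)) * Real.exp (-(αp - s * x) ^ 2) := by
    intro x hx
    rw [abs_of_nonpos hx, ← Real.exp_add]
    congr 1
    rw [hαp, ← hs2]
    field_simp
    ring
  have hptB : ∀ x ∈ Set.Ioc (0:ℝ) y,
      Real.exp (-a * x ^ 2 + b * x - c * |x|)
        = Real.exp ((c - b) ^ 2 / (4 * a)) * Real.exp (-(s * x + αm) ^ 2) := by
    intro x hx
    rw [abs_of_pos hx.1, ← Real.exp_add]
    congr 1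
    rw [hαm, ← hs2]
    field_simp
    ring
  -- integrability of the full integrand on the two pieces
  have hintA : IntegrableOn (fun x => Real.exp (-a * x ^ 2 + b * x - c * |x|))
      (Set.Iic (0:ℝ)) := by
    have h1 : Integrable (fun x : ℝ =>
        Real.exp ((b + c) ^ 2 / (4 * a)) * Real.exp (-(αp - s * x) ^ 2)) := by
      have h2 : Integrable (fun u : ℝ => Real.exp (-(u + αp) ^ 2)) := by
        have := hg.comp_add_right αp
        simpa using this
      have h3 : Integrable (fun x : ℝ => Real.exp (-((-s) * x + αp) ^ 2)) :=
        h2.comp_mul_left' (neg_ne_zero.mpr hs.ne')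
      refine ((h3.congr ?_).const_mul _)
      filter_upwards with x
      ring_nf
    exact (h1.integrableOn).congr_fun (fun x hx => (hptA x hx).symm) measurableSet_Iic
  have hintB : IntegrableOn (fun x => Real.exp (-a * x ^ 2 + b * x - c * |x|))
      (Set.Ioc (0:ℝ) y) := by
    apply Continuous.integrableOn_Ioc
    continuity
  -- split the integral
  have hsplit : (∫ x in Set.Iic y, Real.exp (-a * x ^ 2 + b * x - c * |x|))
      = (∫ x in Set.Iic (0:ℝ), Real.exp (-a * x ^ 2 + b * x - c * |x|))
        + ∫ x in Set.Ioc (0:ℝ) y, Real.exp (-a * x ^ 2 + b * x - c * |x|) := by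
    rw [← setIntegral_union (Set.Iic_disjoint_Ioc le_rfl) measurableSet_Ioc hintA hintB,
      Set.Iic_union_Ioc_eq_Iic hy]
  -- piece A
  have hA : (∫ x in Set.Iic (0:ℝ), Real.exp (-a * x ^ 2 + b * x - c * |x|))
      = Real.exp ((b + c) ^ 2 / (4 * a))
          * (s⁻¹ * ∫ t in Set.Ioi αp, Real.exp (-t ^ 2)) := by
    rw [setIntegral_congr_fun measurableSet_Iic hptA, integral_const_mul]
    congr 1
    calc (∫ x in Set.Iic (0:ℝ), Real.exp (-(αp - s * x) ^ 2))
        = ∫ x in Set.Iic (0:ℝ), (fun u : ℝ => Real.exp (-(αp + s * u) ^ 2)) (-x) := by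
          refine setIntegral_congr_fun measurableSet_Iic fun x _ => ?_
          show Real.exp (-(αp - s * x) ^ 2) = Real.exp (-(αp + s * -x) ^ 2)
          ring_nf
      _ = ∫ u in Set.Ioi (-(0:ℝ)), Real.exp (-(αp + s * u) ^ 2) :=
          integral_comp_neg_Iic 0 (fun u : ℝ => Real.exp (-(αp + s * u) ^ 2))
      _ = ∫ u in Set.Ioi (0:ℝ), (fun t : ℝ => Real.exp (-(αp + t) ^ 2)) (s * u) := by
          rw [neg_zero]
      _ = s⁻¹ • ∫ t in Set.Ioi (s * 0), Real.exp (-(αp + t) ^ 2) :=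
          integral_comp_mul_left_Ioi (fun t : ℝ => Real.exp (-(αp + t) ^ 2)) 0 hs
      _ = s⁻¹ * ∫ t in Set.Ioi (0:ℝ), (fun u : ℝ => Real.exp (-u ^ 2)) (t + αp) := by
          rw [mul_zero, smul_eq_mul]
          congr 1
          refine setIntegral_congr_fun measurableSet_Ioi fun t _ => ?_
          show Real.exp (-(αp + t) ^ 2) = Real.exp (-(t + αp) ^ 2)
          ring_nf
      _ = s⁻¹ * ∫ t in Set.Ioi ((0:ℝ) + αp), Real.exp (-t ^ 2) := by
          rw [aux_shift_Ioi (fun u : ℝ => Real.exp (-u ^ 2)) αp 0]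
      _ = s⁻¹ * ∫ t in Set.Ioi αp, Real.exp (-t ^ 2) := by rw [zero_add]
  -- piece B
  have hβ : αm ≤ s * y + αm := by nlinarith [mul_nonneg hs.le hy]
  have hB : (∫ x in Set.Ioc (0:ℝ) y, Real.exp (-a * x ^ 2 + b * x - c * |x|))
      = Real.exp ((c - b) ^ 2 / (4 * a))
          * (s⁻¹ * ((∫ t in Set.Ioi αm, Real.exp (-t ^ 2))
              - ∫ t in Set.Ioi (s * y + αm), Real.exp (-t ^ 2))) := by
    rw [setIntegral_congr_fun measurableSet_Ioc hptB, integral_const_mul]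
    congr 1
    have hsum : (∫ t in Set.Ioi αm, Real.exp (-t ^ 2))
        = (∫ t in Set.Ioc αm (s * y + αm), Real.exp (-t ^ 2))
          + ∫ t in Set.Ioi (s * y + αm), Real.exp (-t ^ 2) := by
      rw [← Set.Ioc_union_Ioi_eq_Ioi hβ]
      exact setIntegral_union (Set.Ioc_disjoint_Ioi le_rfl) measurableSet_Ioi
        hg.integrableOn hg.integrableOn
    calc (∫ x in Set.Ioc (0:ℝ) y, Real.exp (-(s * x + αm) ^ 2))
        = ∫ x in (0:ℝ)..y, (fun t : ℝ => Real.exp (-t ^ 2)) (s * x + αm) :=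
          (intervalIntegral.integral_of_le hy).symm
      _ = s⁻¹ • ∫ t in (s * 0 + αm)..(s * y + αm), Real.exp (-t ^ 2) :=
          intervalIntegral.integral_comp_mul_add (fun t : ℝ => Real.exp (-t ^ 2)) hs.ne' αm
      _ = s⁻¹ * ∫ t in Set.Ioc αm (s * y + αm), Real.exp (-t ^ 2) := by
          rw [mul_zero, zero_add, smul_eq_mul, intervalIntegral.integral_of_le hβ]
      _ = s⁻¹ * ((∫ t in Set.Ioi αm, Real.exp (-t ^ 2))
              - ∫ t in Set.Ioi (s * y + αm), Real.exp (-t ^ 2)) := by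
          rw [hsum]; ring
  rw [hsplit, hA, hB, integral_Ici_eq_integral_Ioi, integral_Ici_eq_integral_Ioi,
    integral_Ici_eq_integral_Ioi]
  field_simp
end

section
/- Let a > 0, b ∈ ℝ, c ≥ 0, set α₊ := (b+c)/(2√a), α₋ := (c−b)/(2√a) and I(w) := ∫_{w}^{∞} exp(−t²) dt, and let r ∈ [0,1]. Suppose z ∈ ℝ satisfies I(z) = r · [ I(α₊) + exp(−b·c/a) · I(α₋) ], and set y := (α₊ − z)/√a. If y ≤ 0, then ∫_{−∞}^{y} exp(−a x² + b x − c|x|) dx = r · ∫_{−∞}^{∞} exp(−a x² + b x − c|x|) dx; that is, y inverts the cumulative distribution function of the density p(x) ∝ exp(−a x² + b x − c|x|) at the level r. -/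
/-!
Completing the square on each half-line turns the density into a rescaled, shifted Gaussian:
with `α₊ = (b+c)/(2√a)` and `α₋ = (c-b)/(2√a)` it equals `e^{α₊²} e^{-(α₊ - √a x)²}` for `x ≤ 0`
and `e^{α₊²} e^{-bc/a} e^{-(√a x + α₋)²}` for `x ≥ 0`. The substitution `t = α₊ - √a x` gives
`∫_{-∞}^y p = e^{α₊²} I(α₊ - √a y) / √a` for `y ≤ 0`, and the total mass is
`e^{α₊²} (I(α₊) + e^{-bc/a} I(α₋)) / √a`. Since `α₊ - √a y = z`, the hypothesis on `I(z)` is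
exactly the claim.
-/

open MeasureTheory Set Real

section AffineSubstitution

variable {E : Type*} [NormedAddCommGroup E] [NormedSpace ℝ E]

theorem integral_comp_add_right_Ioi (f : ℝ → E) (c d : ℝ) :
    ∫ t in Ioi c, f (t + d) = ∫ s in Ioi (c + d), f s := by
  have h := (measurePreserving_add_right volume d).setIntegral_preimage_emb
    (measurableEmbedding_addRight d) f (Ioi (c + d))
  rw [← h, preimage_add_const_Ioi, add_sub_cancel_right]

theorem integral_comp_mul_add_Ioi (f : ℝ → E) {k : ℝ} (hk : 0 < k) (d u : ℝ) :
    ∫ x in Ioi u, f (k * x + d) = k⁻¹ • ∫ t in Ioi (k * u + d), f t := by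
  rw [integral_comp_mul_left_Ioi (fun t => f (t + d)) u hk, integral_comp_add_right_Ioi]

theorem integral_comp_sub_mul_Iic (f : ℝ → E) {k : ℝ} (hk : 0 < k) (d u : ℝ) :
    ∫ x in Iic u, f (d - k * x) = k⁻¹ • ∫ t in Ioi (d - k * u), f t := by
  have h := integral_comp_neg_Iic u (fun x => f (k * x + d))
  simp only [mul_neg, neg_add_eq_sub] at h
  rw [h, integral_comp_mul_add_Ioi f hk, mul_neg, neg_add_eq_sub]

end AffineSubstitution

noncomputable def gaussianTail (w : ℝ) : ℝ := ∫ t in Ici w, exp (-t ^ 2)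

section GaussianTail

variable {k : ℝ}

theorem integrable_exp_neg_sq_mul_add (hk : k ≠ 0) (q : ℝ) :
    Integrable fun x : ℝ => exp (-(k * x + q) ^ 2) := by
  have h := (integrable_exp_neg_mul_sq (pow_pos (abs_pos.mpr hk) 2)).comp_add_right (q / k)
  refine h.congr (.of_forall fun x => ?_)
  simp only [sq_abs]
  congr 1
  field_simp

theorem integral_Ioi_exp_neg_sq_mul_add (hk : 0 < k) (q u : ℝ) :
    ∫ x in Ioi u, exp (-(k * x + q) ^ 2) = k⁻¹ * gaussianTail (k * u + q) := by
  rw [gaussianTail, integral_Ici_eq_integral_Ioi]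
  exact integral_comp_mul_add_Ioi (fun t => exp (-t ^ 2)) hk q u

theorem integral_Iic_exp_neg_sq_sub_mul (hk : 0 < k) (p u : ℝ) :
    ∫ x in Iic u, exp (-(p - k * x) ^ 2) = k⁻¹ * gaussianTail (p - k * u) := by
  rw [gaussianTail, integral_Ici_eq_integral_Ioi]
  exact integral_comp_sub_mul_Iic (fun t => exp (-t ^ 2)) hk p u

end GaussianTail

section CompletingTheSquare

variable {a : ℝ} (b c : ℝ)

theorem exp_quadratic_sub_abs_of_nonpos (ha : 0 < a) {x : ℝ} (hx : x ≤ 0) :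
    exp (-a * x ^ 2 + b * x - c * |x|)
      = exp (((b + c) / (2 * √a)) ^ 2) * exp (-((b + c) / (2 * √a) - √a * x) ^ 2) := by
  have hs : √a ^ 2 = a := sq_sqrt ha.le
  have hs0 : √a ≠ 0 := (sqrt_pos.mpr ha).ne'
  rw [abs_of_nonpos hx, ← exp_add]
  congr 1
  field_simp
  rw [hs]
  ring

theorem exp_quadratic_sub_abs_of_nonneg (ha : 0 < a) {x : ℝ} (hx : 0 ≤ x) :
    exp (-a * x ^ 2 + b * x - c * |x|)
      = exp (((b + c) / (2 * √a)) ^ 2)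
        * (exp (-(b * c) / a) * exp (-(√a * x + (c - b) / (2 * √a)) ^ 2)) := by
  have hs : √a ^ 2 = a := sq_sqrt ha.le
  have hs0 : √a ≠ 0 := (sqrt_pos.mpr ha).ne'
  rw [abs_of_nonneg hx, ← exp_add, ← exp_add]
  congr 1
  field_simp
  rw [hs]
  ring

end CompletingTheSquare

section Density

variable {a : ℝ} (b c : ℝ)

theorem integral_Iic_exp_quadratic_sub_abs (ha : 0 < a) {y : ℝ} (hy : y ≤ 0) :
    ∫ x in Iic y, exp (-a * x ^ 2 + b * x - c * |x|)
      = exp (((b + c) / (2 * √a)) ^ 2)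
        * ((√a)⁻¹ * gaussianTail ((b + c) / (2 * √a) - √a * y)) := by
  rw [setIntegral_congr_fun measurableSet_Iic
      fun x hx => exp_quadratic_sub_abs_of_nonpos b c ha (le_trans hx hy),
    integral_const_mul, integral_Iic_exp_neg_sq_sub_mul (sqrt_pos.mpr ha)]

theorem integral_Ioi_exp_quadratic_sub_abs (ha : 0 < a) :
    ∫ x in Ioi 0, exp (-a * x ^ 2 + b * x - c * |x|)
      = exp (((b + c) / (2 * √a)) ^ 2)
        * (exp (-(b * c) / a) * ((√a)⁻¹ * gaussianTail ((c - b) / (2 * √a)))) := by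
  rw [setIntegral_congr_fun measurableSet_Ioi
      fun x hx => exp_quadratic_sub_abs_of_nonneg b c ha (le_of_lt hx),
    integral_const_mul, integral_const_mul, integral_Ioi_exp_neg_sq_mul_add (sqrt_pos.mpr ha),
    mul_zero, zero_add]

theorem integrable_exp_quadratic_sub_abs (ha : 0 < a) :
    Integrable fun x => exp (-a * x ^ 2 + b * x - c * |x|) := by
  have hs0 : √a ≠ 0 := (sqrt_pos.mpr ha).ne'
  have hneg : IntegrableOn (fun x => exp (-a * x ^ 2 + b * x - c * |x|)) (Iic 0) := by
    refine (((integrable_exp_neg_sq_mul_add (neg_ne_zero.mpr hs0) ((b + c) / (2 * √a))).const_mul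
      (exp (((b + c) / (2 * √a)) ^ 2))).integrableOn).congr_fun (fun x hx => ?_) measurableSet_Iic
    rw [exp_quadratic_sub_abs_of_nonpos b c ha hx]
    ring_nf
  have hpos : IntegrableOn (fun x => exp (-a * x ^ 2 + b * x - c * |x|)) (Ioi 0) :=
    ((((integrable_exp_neg_sq_mul_add hs0 ((c - b) / (2 * √a))).const_mul
      (exp (-(b * c) / a))).const_mul (exp (((b + c) / (2 * √a)) ^ 2))).integrableOn).congr_fun
      (fun x hx => (exp_quadratic_sub_abs_of_nonneg b c ha (le_of_lt hx)).symm) measurableSet_Ioi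
  simpa using hneg.union hpos

theorem integral_exp_quadratic_sub_abs (ha : 0 < a) :
    ∫ x, exp (-a * x ^ 2 + b * x - c * |x|)
      = exp (((b + c) / (2 * √a)) ^ 2) * ((√a)⁻¹ * (gaussianTail ((b + c) / (2 * √a))
        + exp (-(b * c) / a) * gaussianTail ((c - b) / (2 * √a)))) := by
  have h := integrable_exp_quadratic_sub_abs b c ha
  rw [← intervalIntegral.integral_Iic_add_Ioi h.integrableOn h.integrableOn,
    integral_Iic_exp_quadratic_sub_abs b c ha le_rfl, integral_Ioi_exp_quadratic_sub_abs b c ha,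
    mul_zero, sub_zero]
  ring

end Density

theorem stmt_9_general (a b c r z : ℝ) (ha : 0 < a)
    (hz : (∫ t in Set.Ici z, Real.exp (-t ^ 2))
      = r * ((∫ t in Set.Ici ((b + c) / (2 * Real.sqrt a)), Real.exp (-t ^ 2))
          + Real.exp (-(b * c) / a)
            * ∫ t in Set.Ici ((c - b) / (2 * Real.sqrt a)), Real.exp (-t ^ 2)))
    (hy : ((b + c) / (2 * Real.sqrt a) - z) / Real.sqrt a ≤ 0) :
    (∫ x in Set.Iic (((b + c) / (2 * Real.sqrt a) - z) / Real.sqrt a),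
        Real.exp (-a * x ^ 2 + b * x - c * |x|))
      = r * ∫ x : ℝ, Real.exp (-a * x ^ 2 + b * x - c * |x|) := by
  have hz' : (b + c) / (2 * √a) - √a * (((b + c) / (2 * √a) - z) / √a) = z := by
    field_simp [(sqrt_pos.mpr ha).ne']
    ring
  rw [integral_Iic_exp_quadratic_sub_abs b c ha hy, hz', integral_exp_quadratic_sub_abs b c ha]
  simp only [gaussianTail] at hz ⊢
  rw [hz]
  ring

/-- Correctness of the explicit cdf inversion on the negative half-line:
if `I(z) = r·[I(α₊) + exp(−bc/a)·I(α₋)]` with `I(w) = ∫_w^∞ e^{−t²} dt`,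
`α₊ = (b+c)/(2√a)`, `α₋ = (c−b)/(2√a)`, and `y = (α₊ − z)/√a ≤ 0`, then
`∫_{−∞}^{y} e^{−ax²+bx−c|x|} dx = r · ∫_{−∞}^{∞} e^{−ax²+bx−c|x|} dx`. -/
theorem stmt_9 (a b c r z : ℝ) (ha : 0 < a) (hc : 0 ≤ c) (hr0 : 0 ≤ r) (hr1 : r ≤ 1)
    (hz : (∫ t in Set.Ici z, Real.exp (-t ^ 2))
      = r * ((∫ t in Set.Ici ((b + c) / (2 * Real.sqrt a)), Real.exp (-t ^ 2))
          + Real.exp (-(b * c) / a)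
            * ∫ t in Set.Ici ((c - b) / (2 * Real.sqrt a)), Real.exp (-t ^ 2)))
    (hy : ((b + c) / (2 * Real.sqrt a) - z) / Real.sqrt a ≤ 0) :
    (∫ x in Set.Iic (((b + c) / (2 * Real.sqrt a) - z) / Real.sqrt a),
        Real.exp (-a * x ^ 2 + b * x - c * |x|))
      = r * ∫ x : ℝ, Real.exp (-a * x ^ 2 + b * x - c * |x|) :=
  stmt_9_general a b c r z ha hz hy
end

section
/- Let a > 0, b ∈ ℝ, c ≥ 0, set α₊ := (b+c)/(2√a), α₋ := (c−b)/(2√a) and I(w) := ∫_{w}^{∞} exp(−t²) dt, and let r ∈ [0,1]. Suppose z ∈ ℝ satisfies I(z) = (1−r) · [ exp(b·c/a) · I(α₊) + I(α₋) ], and set y := (z − α₋)/√a. If y ≥ 0, then ∫_{−∞}^{y} exp(−a x² + b x − c|x|) dx = r · ∫_{−∞}^{∞} exp(−a x² + b x − c|x|) dx; that is, y inverts the cumulative distribution function of the density p(x) ∝ exp(−a x² + b x − c|x|) at the level r. -/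
open MeasureTheory Set

private lemma aux_comp_add_right_Ioi (f : ℝ → ℝ) (u d : ℝ) :
    (∫ x in Set.Ioi u, f (x + d)) = ∫ x in Set.Ioi (u + d), f x := by
  have A : MeasurableEmbedding (fun x : ℝ => x + d) :=
    (Homeomorph.addRight d).measurableEmbedding
  have h1 := A.setIntegral_map (μ := volume) f (Set.Ioi (u + d))
  rw [map_add_right_eq_self volume d] at h1
  rw [h1]
  congr 1
  ext x
  simp

private lemma aux_gauss_shift {a : ℝ} (ha : 0 < a) (β u : ℝ) :
    (∫ x in Set.Ici u, Real.exp (-a * x ^ 2 - β * x))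
      = Real.exp (β ^ 2 / (4 * a)) / Real.sqrt a
        * ∫ t in Set.Ici (Real.sqrt a * u + β / (2 * Real.sqrt a)), Real.exp (-t ^ 2) := by
  set s := Real.sqrt a with hs
  have hs0 : 0 < s := Real.sqrt_pos.mpr ha
  have hsq : s ^ 2 = a := Real.sq_sqrt ha.le
  have key : ∀ x : ℝ, -a * x ^ 2 - β * x
      = β ^ 2 / (4 * a) - (s * x + β / (2 * s)) ^ 2 := by
    intro x
    rw [← hsq]
    field_simp
    ring
  have step1 : (∫ x in Set.Ici u, Real.exp (-a * x ^ 2 - β * x))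
      = Real.exp (β ^ 2 / (4 * a)) * ∫ x in Set.Ici u,
          Real.exp (-(s * x + β / (2 * s)) ^ 2) := by
    rw [← integral_const_mul]
    refine setIntegral_congr_fun measurableSet_Ici fun x _ => ?_
    rw [key x, sub_eq_add_neg, Real.exp_add]
  rw [step1]
  have step2 : (∫ x in Set.Ici u, Real.exp (-(s * x + β / (2 * s)) ^ 2))
      = s⁻¹ * ∫ t in Set.Ici (s * u + β / (2 * s)), Real.exp (-t ^ 2) := by
    rw [integral_Ici_eq_integral_Ioi, integral_Ici_eq_integral_Ioi]
    have h3 := MeasureTheory.integral_comp_mul_left_Ioi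
      (fun t => Real.exp (-(t + β / (2 * s)) ^ 2)) u hs0
    simp only [smul_eq_mul] at h3
    rw [h3, aux_comp_add_right_Ioi (fun t => Real.exp (-t ^ 2)) (s * u) (β / (2 * s))]
  rw [step2]
  ring

private lemma aux_integrable_quad {a : ℝ} (ha : 0 < a) (β : ℝ) :
    MeasureTheory.Integrable (fun x : ℝ => Real.exp (-a * x ^ 2 + β * x)) := by
  have h1 : MeasureTheory.Integrable
      (fun x : ℝ => Real.exp (-a * (x - β / (2 * a)) ^ 2)) := by
    have := integrable_exp_neg_mul_sq ha
    simpa using this.comp_sub_right (β / (2 * a))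
  have h2 := h1.const_mul (Real.exp (β ^ 2 / (4 * a)))
  refine h2.congr (Filter.Eventually.of_forall fun x => ?_)
  show Real.exp (β ^ 2 / (4 * a)) * Real.exp (-a * (x - β / (2 * a)) ^ 2)
    = Real.exp (-a * x ^ 2 + β * x)
  rw [← Real.exp_add]
  congr 1
  field_simp
  ring

/-- Correctness of the explicit cdf inversion on the positive half-line:
if `I(z) = (1−r)·[exp(bc/a)·I(α₊) + I(α₋)]` with `I(w) = ∫_w^∞ e^{−t²} dt`,
`α₊ = (b+c)/(2√a)`, `α₋ = (c−b)/(2√a)`, and `y = (z − α₋)/√a ≥ 0`, then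
`∫_{−∞}^{y} e^{−ax²+bx−c|x|} dx = r · ∫_{−∞}^{∞} e^{−ax²+bx−c|x|} dx`. -/
theorem stmt_10 (a b c r z : ℝ) (ha : 0 < a) (hc : 0 ≤ c) (hr0 : 0 ≤ r) (hr1 : r ≤ 1)
    (hz : (∫ t in Set.Ici z, Real.exp (-t ^ 2))
      = (1 - r) * (Real.exp ((b * c) / a)
            * (∫ t in Set.Ici ((b + c) / (2 * Real.sqrt a)), Real.exp (-t ^ 2))
          + ∫ t in Set.Ici ((c - b) / (2 * Real.sqrt a)), Real.exp (-t ^ 2)))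
    (hy : 0 ≤ (z - (c - b) / (2 * Real.sqrt a)) / Real.sqrt a) :
    (∫ x in Set.Iic ((z - (c - b) / (2 * Real.sqrt a)) / Real.sqrt a),
        Real.exp (-a * x ^ 2 + b * x - c * |x|))
      = r * ∫ x : ℝ, Real.exp (-a * x ^ 2 + b * x - c * |x|) := by
  set s := Real.sqrt a with hs
  have hs0 : 0 < s := Real.sqrt_pos.mpr ha
  set y := (z - (c - b) / (2 * s)) / s with hy_def
  have hsy : s * y + (c - b) / (2 * s) = z := by
    rw [hy_def]; field_simp; ring
  -- integrability of the density
  have hf : MeasureTheory.Integrable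
      (fun x : ℝ => Real.exp (-a * x ^ 2 + b * x - c * |x|)) := by
    refine (aux_integrable_quad ha b).mono' ?_ (Filter.Eventually.of_forall fun x => ?_)
    · apply Continuous.aestronglyMeasurable
      fun_prop
    · rw [Real.norm_eq_abs, abs_of_pos (Real.exp_pos _)]
      apply Real.exp_le_exp.mpr
      nlinarith [abs_nonneg x, mul_nonneg hc (abs_nonneg x)]
  have hg : MeasureTheory.Integrable
      (fun x : ℝ => Real.exp (-a * x ^ 2 - (c - b) * x)) := by
    have := aux_integrable_quad ha (b - c)
    refine this.congr (Filter.Eventually.of_forall fun x => ?_)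
    ring_nf
  -- negative half
  have hneg : (∫ x in Set.Iic (0 : ℝ), Real.exp (-a * x ^ 2 + b * x - c * |x|))
      = Real.exp ((b + c) ^ 2 / (4 * a)) / s
        * ∫ t in Set.Ici ((b + c) / (2 * s)), Real.exp (-t ^ 2) := by
    have e1 : (∫ x in Set.Iic (0 : ℝ), Real.exp (-a * x ^ 2 + b * x - c * |x|))
        = ∫ x in Set.Iic (0 : ℝ), Real.exp (-a * x ^ 2 + (b + c) * x) := by
      refine setIntegral_congr_fun measurableSet_Iic fun x hx => ?_
      have : |x| = -x := abs_of_nonpos hx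
      rw [this]; ring_nf
    have e2 := integral_comp_neg_Ioi (0 : ℝ)
      (fun x => Real.exp (-a * x ^ 2 + (b + c) * x))
    simp only [neg_zero, neg_sq, mul_neg] at e2
    have e3 : (∫ x in Set.Ioi (0 : ℝ),
        Real.exp (-a * x ^ 2 + -((b + c) * x)))
        = ∫ x in Set.Ici (0 : ℝ), Real.exp (-a * x ^ 2 - (b + c) * x) := by
      rw [integral_Ici_eq_integral_Ioi]
      refine setIntegral_congr_fun measurableSet_Ioi fun x _ => ?_
      ring_nf
    have e4 := aux_gauss_shift ha (b + c) 0
    rw [mul_zero, zero_add] at e4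
    rw [e1, ← e2, e3, e4]
  -- positive pieces
  have hpos0 := aux_gauss_shift ha (c - b) 0
  rw [mul_zero, zero_add] at hpos0
  have hposy := aux_gauss_shift ha (c - b) y
  rw [hsy] at hposy
  -- split Ici 0 = Ioc 0 y ∪ Ioi y
  have hsplit : (∫ x in Set.Ioc (0 : ℝ) y, Real.exp (-a * x ^ 2 - (c - b) * x))
      = (∫ x in Set.Ici (0 : ℝ), Real.exp (-a * x ^ 2 - (c - b) * x))
        - ∫ x in Set.Ici y, Real.exp (-a * x ^ 2 - (c - b) * x) := by
    have hu : Set.Ioc (0 : ℝ) y ∪ Set.Ioi y = Set.Ioi 0 := Set.Ioc_union_Ioi_eq_Ioi hy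
    have := MeasureTheory.setIntegral_union (s := Set.Ioc (0:ℝ) y) (t := Set.Ioi y)
      (Set.Ioc_disjoint_Ioi le_rfl)
      measurableSet_Ioi (hg.integrableOn) (hg.integrableOn)
      (f := fun x => Real.exp (-a * x ^ 2 - (c - b) * x)) (μ := volume)
    rw [hu] at this
    rw [integral_Ici_eq_integral_Ioi, integral_Ici_eq_integral_Ioi, this]
    ring
  -- middle piece equals positive-integrand
  have hmid : (∫ x in Set.Ioc (0 : ℝ) y, Real.exp (-a * x ^ 2 + b * x - c * |x|))
      = ∫ x in Set.Ioc (0 : ℝ) y, Real.exp (-a * x ^ 2 - (c - b) * x) := by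
    refine setIntegral_congr_fun measurableSet_Ioc fun x hx => ?_
    rw [abs_of_pos hx.1]; ring_nf
  -- split Iic y = Iic 0 ∪ Ioc 0 y
  have hLHS : (∫ x in Set.Iic y, Real.exp (-a * x ^ 2 + b * x - c * |x|))
      = (∫ x in Set.Iic (0 : ℝ), Real.exp (-a * x ^ 2 + b * x - c * |x|))
        + ∫ x in Set.Ioc (0 : ℝ) y, Real.exp (-a * x ^ 2 + b * x - c * |x|) := by
    have hu : Set.Iic (0 : ℝ) ∪ Set.Ioc 0 y = Set.Iic y := Set.Iic_union_Ioc_eq_Iic hy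
    have := MeasureTheory.setIntegral_union (s := Set.Iic (0:ℝ)) (t := Set.Ioc (0:ℝ) y)
      (Set.Iic_disjoint_Ioc le_rfl)
      measurableSet_Ioc (hf.integrableOn) (hf.integrableOn)
      (f := fun x => Real.exp (-a * x ^ 2 + b * x - c * |x|)) (μ := volume)
    rw [hu] at this
    rw [this]
  -- total integral
  have hTot : (∫ x : ℝ, Real.exp (-a * x ^ 2 + b * x - c * |x|))
      = (∫ x in Set.Iic (0 : ℝ), Real.exp (-a * x ^ 2 + b * x - c * |x|))
        + ∫ x in Set.Ici (0 : ℝ), Real.exp (-a * x ^ 2 - (c - b) * x) := by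
    have hu : Set.Iic (0 : ℝ) ∪ Set.Ioi 0 = Set.univ := Set.Iic_union_Ioi
    have h1 := MeasureTheory.setIntegral_union (s := Set.Iic (0:ℝ)) (t := Set.Ioi (0:ℝ))
      (Set.Iic_disjoint_Ioi le_rfl)
      measurableSet_Ioi (hf.integrableOn) (hf.integrableOn)
      (f := fun x => Real.exp (-a * x ^ 2 + b * x - c * |x|)) (μ := volume)
    rw [hu, MeasureTheory.setIntegral_univ] at h1
    have h2 : (∫ x in Set.Ioi (0 : ℝ), Real.exp (-a * x ^ 2 + b * x - c * |x|))
        = ∫ x in Set.Ici (0 : ℝ), Real.exp (-a * x ^ 2 - (c - b) * x) := by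
      rw [integral_Ici_eq_integral_Ioi]
      refine setIntegral_congr_fun measurableSet_Ioi fun x hx => ?_
      rw [abs_of_pos hx]; ring_nf
    rw [h1, h2]
  -- final algebra
  have hAB : Real.exp ((c - b) ^ 2 / (4 * a)) * Real.exp (b * c / a)
      = Real.exp ((b + c) ^ 2 / (4 * a)) := by
    rw [← Real.exp_add]
    congr 1
    field_simp
    ring
  rw [hLHS, hTot, hmid, hsplit, hneg, hpos0, hposy]
  set Ip := ∫ t in Set.Ici ((b + c) / (2 * s)), Real.exp (-t ^ 2)
  set Im := ∫ t in Set.Ici ((c - b) / (2 * s)), Real.exp (-t ^ 2)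
  set Iz := ∫ t in Set.Ici z, Real.exp (-t ^ 2)
  have hz' : Iz = (1 - r) * (Real.exp (b * c / a) * Ip + Im) := hz
  rw [← hs]
  linear_combination (-(Real.exp ((c - b) ^ 2 / (4 * a)) / s)) * hz'
    + (-((1 - r) * Ip / s)) * hAB
end
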